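/- arXiv:1503.05010 — 3 statements merged into one kernel-verified Lean document; each statement's English description precedes it below -/
import Mathlib

section
/- The pair (L, R), where L is the class of split monomorphisms and R is the class of split epimorphisms, is a weak factorization system on the category AddCommGrp of abelian groups: R = L^□, L = ^□R, and every morphism factors as a split monomorphism followed by a split epimorphism. -/
open CategoryTheory

universe v u

/-- A weak factorization system `(L, R)` on a category: `R = L^□`, `L = ^□R`, and
every morphism factors as a morphism in `L` followed by a morphism in `R`. -/
def IsWeakFactorizationSystem {K : Type u} [Category.{v} K]
    (L R : MorphismProperty K) : Prop :=
  (∀ ⦃X Y : K⦄ (g : X ⟶ Y),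
      R g ↔ ∀ ⦃A B : K⦄ (f : A ⟶ B), L f → HasLiftingProperty f g) ∧
  (∀ ⦃A B : K⦄ (f : A ⟶ B),
      L f ↔ ∀ ⦃X Y : K⦄ (g : X ⟶ Y), R g → HasLiftingProperty f g) ∧
  (∀ ⦃A B : K⦄ (h : A ⟶ B),
      ∃ (C : K) (f : A ⟶ C) (g : C ⟶ B), L f ∧ R g ∧ f ≫ g = h)

/-! The whole argument lives in any preadditive category with a zero object and binary
biproducts. A map with the right lifting property against the split mono `0 ⟶ Y` gets a section
as a lift, dually a retraction from `A ⟶ 0`, and every `h : A ⟶ B` factors through its graph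
`A ⟶ A ⊞ B` followed by the projection. -/

open Limits ZeroObject

namespace CategoryTheory

variable {C : Type u} [Category.{v} C]

/-- For a square `f ≫ b = t ≫ g`, a retraction `r` of `f` and a section `s` of `g`, the
diagonal `r ≫ t + (𝟙 - r ≫ f) ≫ b ≫ s` corrects the naive lift `b ≫ s` on the image of `f`. -/
instance hasLiftingProperty_of_isSplitMono_of_isSplitEpi [Preadditive C] {A B X Y : C}
    (f : A ⟶ B) (g : X ⟶ Y) [IsSplitMono f] [IsSplitEpi g] : HasLiftingProperty f g where
  sq_hasLift {t b} sq :=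
    ⟨⟨{ l := retraction f ≫ t + b ≫ section_ g - retraction f ≫ f ≫ b ≫ section_ g
        fac_left := by simp [Preadditive.comp_add, Preadditive.comp_sub, ← Category.assoc]
        fac_right := by
          simp [Preadditive.add_comp, Preadditive.sub_comp, sq.w] }⟩⟩

section ZeroObject

variable [HasZeroMorphisms C] [HasZeroObject C]

instance isSplitMono_zero_from_zero (Y : C) : IsSplitMono (0 : (0 : C) ⟶ Y) :=
  IsSplitMono.mk' ⟨0, (isZero_zero C).eq_of_src _ _⟩

instance isSplitEpi_zero_to_zero (X : C) : IsSplitEpi (0 : X ⟶ (0 : C)) :=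
  IsSplitEpi.mk' ⟨0, (isZero_zero C).eq_of_tgt _ _⟩

lemma isSplitEpi_of_hasLiftingProperty_zero {X Y : C} (g : X ⟶ Y)
    [HasLiftingProperty (0 : (0 : C) ⟶ Y) g] : IsSplitEpi g :=
  have sq : CommSq (0 : (0 : C) ⟶ X) 0 g (𝟙 Y) := ⟨by simp⟩
  IsSplitEpi.mk' ⟨sq.lift, sq.fac_right⟩

lemma isSplitMono_of_hasLiftingProperty_zero {A B : C} (f : A ⟶ B)
    [HasLiftingProperty f (0 : A ⟶ (0 : C))] : IsSplitMono f :=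
  have sq : CommSq (𝟙 A) f (0 : A ⟶ (0 : C)) 0 := ⟨(isZero_zero C).eq_of_tgt _ _⟩
  IsSplitMono.mk' ⟨sq.lift, sq.fac_left⟩

end ZeroObject

lemma isSplitMono_biprod_lift_id [HasZeroMorphisms C] {A B : C} [HasBinaryBiproduct A B]
    (h : A ⟶ B) : IsSplitMono (biprod.lift (𝟙 A) h) :=
  IsSplitMono.mk' ⟨biprod.fst, by simp⟩

theorem isWeakFactorizationSystem_isSplitMono_isSplitEpi [Preadditive C] [HasZeroObject C]
    [HasBinaryBiproducts C] :
    IsWeakFactorizationSystem (fun _ _ f => IsSplitMono f : MorphismProperty C)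
      (fun _ _ g => IsSplitEpi g : MorphismProperty C) := by
  refine ⟨fun X Y g => ⟨fun _ _ _ f _ => inferInstance, fun hg => ?_⟩,
    fun A B f => ⟨fun _ _ _ g _ => inferInstance, fun hf => ?_⟩,
    fun A B h => ⟨A ⊞ B, biprod.lift (𝟙 A) h, biprod.snd,
      isSplitMono_biprod_lift_id h, inferInstance, by simp⟩⟩
  · have := hg (0 : (0 : C) ⟶ Y) inferInstance
    exact isSplitEpi_of_hasLiftingProperty_zero g
  · have := hf (0 : A ⟶ (0 : C)) inferInstance
    exact isSplitMono_of_hasLiftingProperty_zero f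

end CategoryTheory

/-- (split monomorphisms, split epimorphisms) is a weak factorization
system on the category of abelian groups. -/
theorem splitMono_splitEpi_wfs :
    IsWeakFactorizationSystem
      (fun _ _ f => IsSplitMono f : MorphismProperty AddCommGrpCat)
      (fun _ _ g => IsSplitEpi g : MorphismProperty AddCommGrpCat) :=
  isWeakFactorizationSystem_isSplitMono_isSplitEpi
end

section
/- Let K be a category with a left accurate functorial factorization (E₀, l, r). Let (g, t) and (g', t') be R-algebras, let (x, y) : g → g' be a morphism in Arrow(K), and suppose there exists s : E₀(g) → E₀(Lg) making (Lg, s) an L-coalgebra. If for every L-coalgebra (f, σ) and every morphism (u, v) : f → g in Arrow(K) one has x ∘ t ∘ E(u,v) ∘ σ = t' ∘ E(x ∘ u, y ∘ v) ∘ σ, then x ∘ t = t' ∘ E(x,y), i.e. (x, y) is a morphism of R-algebras. -/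
open CategoryTheory CategoryTheory.Limits

universe v u

/-- A functorial factorization on `K`: a functor `E : Arrow K ⥤ K` together with
natural transformations `l` (from the domain functor) and `r` (to the codomain
functor) such that `Lf ≫ Rf = f` for every arrow `f`. -/
structure FunctorialFactorization (K : Type u) [Category.{v} K] where
  E : Arrow K ⥤ K
  l : (Arrow.leftFunc : Arrow K ⥤ K) ⟶ E
  r : E ⟶ (Arrow.rightFunc : Arrow K ⥤ K)
  fac : ∀ f : Arrow K, l.app f ≫ r.app f = f.hom

namespace FunctorialFactorization

variable {K : Type u} [Category.{v} K]

/-- The morphism `(id, Rf) : Lf ⟶ f` in the arrow category. -/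
def sqL (F : FunctorialFactorization K) (f : Arrow K) :
    Arrow.mk (F.l.app f) ⟶ f :=
  Arrow.homMk (u := 𝟙 f.left) (v := F.r.app f) (by exact (Category.id_comp _).trans (F.fac f).symm)

/-- The morphism `(Lf, id) : f ⟶ Rf` in the arrow category. -/
def sqR (F : FunctorialFactorization K) (f : Arrow K) :
    f ⟶ Arrow.mk (F.r.app f) :=
  Arrow.homMk (u := F.l.app f) (v := 𝟙 f.right) (by exact (F.fac f).trans (Category.comp_id _).symm)

/-- Left accuracy: `E(id, Rf) = R(Lf)` for every arrow `f`. -/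
def LeftAccurate (F : FunctorialFactorization K) : Prop :=
  ∀ f : Arrow K, F.E.map (F.sqL f) = F.r.app (Arrow.mk (F.l.app f))

/-- Right accuracy: `E(Lf, id) = L(Rf)` for every arrow `f`. -/
def RightAccurate (F : FunctorialFactorization K) : Prop :=
  ∀ f : Arrow K, F.E.map (F.sqR f) = F.l.app (Arrow.mk (F.r.app f))

/-- `(f, s)` is an `L`-coalgebra: `s ∘ f = Lf` and `Rf ∘ s = id`. -/
def IsCoalgebra (F : FunctorialFactorization K) (f : Arrow K)
    (s : f.right ⟶ F.E.obj f) : Prop :=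
  f.hom ≫ s = F.l.app f ∧ s ≫ F.r.app f = 𝟙 f.right

/-- `(g, t)` is an `R`-algebra: `g ∘ t = Rg` and `t ∘ Lg = id`. -/
def IsAlgebra (F : FunctorialFactorization K) (g : Arrow K)
    (t : F.E.obj g ⟶ g.left) : Prop :=
  t ≫ g.hom = F.r.app g ∧ F.l.app g ≫ t = 𝟙 g.left

end FunctorialFactorization

namespace FunctorialFactorization

variable {K : Type u} [Category.{v} K] {F : FunctorialFactorization K}

/-- Left accuracy identifies `E(id, Rf)` with `R(Lf)`, of which `s` is a section. -/
theorem LeftAccurate.comp_map_sqL_assoc (hF : F.LeftAccurate) {f : Arrow K}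
    {s : F.E.obj f ⟶ F.E.obj (Arrow.mk (F.l.app f))} (hs : F.IsCoalgebra (Arrow.mk (F.l.app f)) s)
    {Z : K} (h : F.E.obj f ⟶ Z) : s ≫ F.E.map (F.sqL f) ≫ h = h := by
  have hsplit : s ≫ F.E.map (F.sqL f) = 𝟙 _ := (congrArg (s ≫ ·) (hF f)).trans hs.2
  rw [← Category.assoc, hsplit, Category.id_comp]

end FunctorialFactorization

open FunctorialFactorization in
theorem algebra_hom_of_coherent_general {K : Type u} [Category.{v} K]
    (F : FunctorialFactorization K) (hF : F.LeftAccurate)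
    (g g' : Arrow K) (t : F.E.obj g ⟶ g.left) (t' : F.E.obj g' ⟶ g'.left)
    (xy : g ⟶ g')
    (s : F.E.obj g ⟶ F.E.obj (Arrow.mk (F.l.app g)))
    (hs : F.IsCoalgebra (Arrow.mk (F.l.app g)) s)
    (coh : ∀ (f : Arrow K) (σ : f.right ⟶ F.E.obj f), F.IsCoalgebra f σ →
      ∀ φ : f ⟶ g, σ ≫ F.E.map φ ≫ t ≫ xy.left = σ ≫ F.E.map (φ ≫ xy) ≫ t') :
    t ≫ xy.left = F.E.map xy ≫ t' := by
  have key := coh _ s hs (F.sqL g)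
  rwa [F.E.map_comp, Category.assoc, hF.comp_map_sqL_assoc hs, hF.comp_map_sqL_assoc hs] at key

open FunctorialFactorization in
/-- (Fullness of `Γ`, Lemma 3.3.)  For a left accurate functorial
factorization, any morphism `(x, y) : g ⟶ g'` between `R`-algebras that is
compatible with all the induced lifting functions is a morphism of `R`-algebras. -/
theorem algebra_hom_of_coherent {K : Type u} [Category.{v} K]
    (F : FunctorialFactorization K) (hF : F.LeftAccurate)
    (g g' : Arrow K) (t : F.E.obj g ⟶ g.left) (t' : F.E.obj g' ⟶ g'.left)
    (ht : F.IsAlgebra g t) (ht' : F.IsAlgebra g' t')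
    (xy : g ⟶ g')
    (s : F.E.obj g ⟶ F.E.obj (Arrow.mk (F.l.app g)))
    (hs : F.IsCoalgebra (Arrow.mk (F.l.app g)) s)
    (coh : ∀ (f : Arrow K) (σ : f.right ⟶ F.E.obj f), F.IsCoalgebra f σ →
      ∀ φ : f ⟶ g, σ ≫ F.E.map φ ≫ t ≫ xy.left = σ ≫ F.E.map (φ ≫ xy) ≫ t') :
    t ≫ xy.left = F.E.map xy ≫ t' :=
  algebra_hom_of_coherent_general F hF g g' t t' xy s hs coh
end

section
/- Let K be a model category equipped with two functorial factorizations: (E₀, l, r) whose left parts Lf are cofibrations and whose right parts R₀f are trivial fibrations, and (E₀', l', r') whose left parts L₀'f are trivial cofibrations and whose right parts R'f are fibrations; define the composite factorization by L₀f := L₀'(Lf) and Rf := R₀f ∘ R'(Lf). Let f : A → B be a weak equivalence and let r : B → E₀(f) satisfy r ∘ f = Lf and R₀f ∘ r = id_B (i.e. (f, r) is an L-coalgebra). Then there exists s : B → E₀'(Lf) such that s ∘ f = L₀f, Rf ∘ s = id_B, and R'(Lf) ∘ s = r; in particular every L-coalgebra whose underlying morphism is a weak equivalence arises from an L₀-coalgebra.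 -/
open CategoryTheory CategoryTheory.Limits

universe v u

/-- A model structure on a category: weak equivalences satisfy 2-out-of-3 and are
closed under retracts in the arrow category, and (cofibrations, trivial fibrations)
and (trivial cofibrations, fibrations) are weak factorization systems. -/
structure ModelStructure (K : Type u) [Category.{v} K] where
  fib : MorphismProperty K
  cof : MorphismProperty K
  weq : MorphismProperty K
  weq_comp : ∀ ⦃X Y Z : K⦄ (f : X ⟶ Y) (g : Y ⟶ Z),
    weq f → weq g → weq (f ≫ g)
  weq_cancel_left : ∀ ⦃X Y Z : K⦄ (f : X ⟶ Y) (g : Y ⟶ Z),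
    weq f → weq (f ≫ g) → weq g
  weq_cancel_right : ∀ ⦃X Y Z : K⦄ (f : X ⟶ Y) (g : Y ⟶ Z),
    weq g → weq (f ≫ g) → weq f
  weq_retract : ∀ (f g : Arrow K) (i : f ⟶ g) (p : g ⟶ f),
    i ≫ p = 𝟙 f → weq g.hom → weq f.hom
  wfs₁ : IsWeakFactorizationSystem cof (fib ⊓ weq)
  wfs₂ : IsWeakFactorizationSystem (cof ⊓ weq) fib

namespace FunctorialFactorization

variable {K : Type u} [Category.{v} K]

/-- The functor `Arrow K ⥤ Arrow K` sending `f` to its left part `Lf`. -/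
@[simps]
def lArrow (F : FunctorialFactorization K) : Arrow K ⥤ Arrow K where
  obj f := Arrow.mk (F.l.app f)
  map {f g} φ := Arrow.homMk (u := φ.left) (v := F.E.map φ)
    (by exact F.l.naturality φ)

/-- The composite functorial factorization obtained from two functorial
factorizations `F₁` (with parts `L`, `R₀`) and `F₂` (with parts `L₀'`, `R'`) by
setting `L₀f := L₀'(Lf)` and `Rf := R₀f ∘ R'(Lf)`; its middle functor is
`f ↦ E₀'(Lf)`. -/
def comp (F₁ F₂ : FunctorialFactorization K) : FunctorialFactorization K where
  E := F₁.lArrow ⋙ F₂.E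
  l :=
    { app := fun f => F₂.l.app (F₁.lArrow.obj f)
      naturality := fun f g φ => F₂.l.naturality (F₁.lArrow.map φ) }
  r :=
    { app := fun f => F₂.r.app (F₁.lArrow.obj f) ≫ F₁.r.app f
      naturality := fun f g φ => by
        have h₂ := F₂.r.naturality (F₁.lArrow.map φ)
        have h₁ := F₁.r.naturality φ
        dsimp at h₂ h₁ ⊢
        erw [← Category.assoc, h₂, Category.assoc, h₁, Category.assoc]; rfl }
  fac := fun f => by
    have := F₂.fac (F₁.lArrow.obj f)
    dsimp at this ⊢
    erw [← Category.assoc, this]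
    exact F₁.fac f

end FunctorialFactorization

/-!
A coalgebra structure `r` exhibits `f` as a retract of the cofibration `Lf`, so `f` is a
cofibration and hence a trivial cofibration. The required `s` is then a lift in the square
with left side `f`, right side the fibration `R'(Lf)`, top `L₀'(Lf)` and bottom `r`.
-/

namespace IsWeakFactorizationSystem

variable {K : Type u} [Category.{v} K] {L R : MorphismProperty K}

theorem left_eq_llp (h : IsWeakFactorizationSystem L R) : L = R.llp := by
  ext A B f
  exact h.2.1 f

theorem hasLiftingProperty (h : IsWeakFactorizationSystem L R)
    {A B X Y : K} {f : A ⟶ B} {g : X ⟶ Y} (hf : L f) (hg : R g) :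
    HasLiftingProperty f g :=
  (h.2.1 f).mp hf g hg

theorem left_of_retractArrow (h : IsWeakFactorizationSystem L R)
    {A B A' B' : K} {f : A ⟶ B} {g : A' ⟶ B'} (e : RetractArrow f g) (hg : L g) :
    L f := by
  rw [h.left_eq_llp] at hg ⊢
  exact MorphismProperty.of_retract e hg

end IsWeakFactorizationSystem

namespace FunctorialFactorization

variable {K : Type u} [Category.{v} K]

def retractArrowOfCoalgebra (F : FunctorialFactorization K) (f : Arrow K)
    (s : f.right ⟶ F.E.obj f) (hs₁ : f.hom ≫ s = F.l.app f)
    (hs₂ : s ≫ F.r.app f = 𝟙 f.right) : RetractArrow f.hom (F.l.app f) where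
  i := Arrow.homMk (u := 𝟙 f.left) (v := s) ((Category.id_comp _).trans hs₁.symm)
  r := Arrow.homMk (u := 𝟙 f.left) (v := F.r.app f) ((Category.id_comp _).trans (F.fac f).symm)
  retract := by
    ext
    exacts [Category.comp_id _, hs₂]

end FunctorialFactorization

theorem coalgebra_lifts_through_comp_general {K : Type u} [Category.{v} K]
    (M : ModelStructure K)
    (F₁ F₂ : FunctorialFactorization K)
    (h₁l : ∀ f : Arrow K, M.cof (F₁.l.app f))
    (h₂r : ∀ f : Arrow K, M.fib (F₂.r.app f))
    (f : Arrow K) (hf : M.weq f.hom)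
    (r : f.right ⟶ F₁.E.obj f)
    (hr₁ : f.hom ≫ r = F₁.l.app f) (hr₂ : r ≫ F₁.r.app f = 𝟙 f.right) :
    ∃ s : f.right ⟶ F₂.E.obj (Arrow.mk (F₁.l.app f)),
      f.hom ≫ s = (F₁.comp F₂).l.app f ∧
      s ≫ (F₁.comp F₂).r.app f = 𝟙 f.right ∧
      s ≫ F₂.r.app (Arrow.mk (F₁.l.app f)) = r := by
  have hcof : M.cof f.hom :=
    M.wfs₁.left_of_retractArrow (F₁.retractArrowOfCoalgebra f r hr₁ hr₂) (h₁l f)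
  have sq : CommSq (F₂.l.app (Arrow.mk (F₁.l.app f))) f.hom
      (F₂.r.app (Arrow.mk (F₁.l.app f))) r :=
    ⟨by rw [F₂.fac (Arrow.mk (F₁.l.app f))]; exact hr₁.symm⟩
  have : sq.HasLift :=
    (M.wfs₂.hasLiftingProperty ⟨hcof, hf⟩ (h₂r (Arrow.mk (F₁.l.app f)))).sq_hasLift sq
  exact ⟨sq.lift, sq.fac_left, (sq.fac_right_assoc (F₁.r.app f)).trans hr₂, sq.fac_right⟩

/-- With `F₁` a (cofibration, trivial fibration) functorial
factorization and `F₂` a (trivial cofibration, fibration) functorial factorization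
on a model category, and the composite factorization `L₀f := L₀'(Lf)`,
`Rf := R₀f ∘ R'(Lf)`: every `L`-coalgebra `(f, r)` whose underlying morphism `f`
is a weak equivalence arises from an `L₀`-coalgebra, i.e. there is
`s : B ⟶ E₀'(Lf)` with `s ∘ f = L₀f`, `Rf ∘ s = id` and `R'(Lf) ∘ s = r`
(Remark 5.4(1)). -/
theorem coalgebra_lifts_through_comp {K : Type u} [Category.{v} K]
    [HasLimits K] [HasColimits K] (M : ModelStructure K)
    (F₁ F₂ : FunctorialFactorization K)
    (h₁l : ∀ f : Arrow K, M.cof (F₁.l.app f))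
    (h₁r : ∀ f : Arrow K, (M.fib ⊓ M.weq) (F₁.r.app f))
    (h₂l : ∀ f : Arrow K, (M.cof ⊓ M.weq) (F₂.l.app f))
    (h₂r : ∀ f : Arrow K, M.fib (F₂.r.app f))
    (f : Arrow K) (hf : M.weq f.hom)
    (r : f.right ⟶ F₁.E.obj f)
    (hr₁ : f.hom ≫ r = F₁.l.app f) (hr₂ : r ≫ F₁.r.app f = 𝟙 f.right) :
    ∃ s : f.right ⟶ F₂.E.obj (Arrow.mk (F₁.l.app f)),
      f.hom ≫ s = (F₁.comp F₂).l.app f ∧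
      s ≫ (F₁.comp F₂).r.app f = 𝟙 f.right ∧
      s ≫ F₂.r.app (Arrow.mk (F₁.l.app f)) = r :=
  coalgebra_lifts_through_comp_general M F₁ F₂ h₁l h₂r f hf r hr₁ hr₂
end
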